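/- arXiv:0910.3675 — 2 statements merged into one kernel-verified Lean document; each statement's English description precedes it below -/
import Mathlib

section
/- Let P and Q be orthogonal projections on a Hilbert space H such that Q - P has finite rank and Tr(Q - P) = 0. Then there exists a unitary V on H which acts as the identity on the orthogonal complement of the range of Q - P and satisfies Q = V* P V. -/
/-- A continuous linear operator has finite rank if its range is finite dimensional. -/
def FiniteRankOp {H : Type*} [NormedAddCommGroup H] [InnerProductSpace ℂ H]
    (T : H →L[ℂ] H) : Prop :=
  FiniteDimensional ℂ (LinearMap.range (T : H →ₗ[ℂ] H))

/-- The trace of a finite-rank operator, computed as the trace of its compression to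
its (finite-dimensional) range. -/
noncomputable def trFR {H : Type*} [NormedAddCommGroup H] [InnerProductSpace ℂ H]
    (T : H →L[ℂ] H) : ℂ :=
  LinearMap.trace ℂ (LinearMap.range (T : H →ₗ[ℂ] H))
    ((T : H →ₗ[ℂ] H).restrict fun x _ => LinearMap.mem_range_self _ x)

/-!
Write `T = Q - P` and `R = range T`. For idempotents one has `P T = T (1 - Q)`, `Q T = T (1 - P)`
and `T P = (1 - Q) T`, so `R` is invariant under `P` and `Q`, while `Rᗮ = ker T` is invariant
under `P`, with `P = Q` there. On the finite-dimensional space `R` the restrictions of `P` and `Q`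
are orthogonal projections whose ranks differ by `tr T = 0`; an isometry of `R` mapping
`range Q|_R` onto `range P|_R` (and hence their complements onto each other) conjugates one into
the other, and extending it by the identity on `Rᗮ` gives `V`.
-/

open Module LinearMap Submodule

theorem IsIdempotentElem.mul_sub_eq_sub_mul_one_sub {R : Type*} [Ring R] {p q : R}
    (hp : IsIdempotentElem p) (hq : IsIdempotentElem q) : p * (q - p) = (q - p) * (1 - q) := by
  simp only [mul_sub, sub_mul, mul_one, hp.eq, hq.eq]
  abel

theorem IsIdempotentElem.sub_mul_eq_one_sub_mul_sub {R : Type*} [Ring R] {p q : R}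
    (hp : IsIdempotentElem p) (hq : IsIdempotentElem q) : (q - p) * p = (1 - q) * (q - p) := by
  simp only [mul_sub, sub_mul, one_mul, hp.eq, hq.eq]
  abel

namespace LinearMap

section Idempotent

variable {R M : Type*} [Ring R] [AddCommGroup M] [Module R M] {p q : M →ₗ[R] M}

theorem IsIdempotentElem.mapsTo_range_sub (hp : IsIdempotentElem p) (hq : IsIdempotentElem q) :
    Set.MapsTo p (range (q - p)) (range (q - p)) := by
  rintro _ ⟨x, rfl⟩
  exact ⟨(1 - q) x, by rw [← Module.End.mul_apply, ← hp.mul_sub_eq_sub_mul_one_sub hq]; rfl⟩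

theorem IsIdempotentElem.mapsTo_range_sub' (hp : IsIdempotentElem p) (hq : IsIdempotentElem q) :
    Set.MapsTo q (range (q - p)) (range (q - p)) := by
  simpa only [← neg_sub q p, range_neg] using hq.mapsTo_range_sub hp

theorem IsIdempotentElem.mapsTo_ker_sub (hp : IsIdempotentElem p) (hq : IsIdempotentElem q) :
    Set.MapsTo p (ker (q - p)) (ker (q - p)) := by
  intro x hx
  rw [SetLike.mem_coe, mem_ker] at hx ⊢
  rw [← Module.End.mul_apply, hp.sub_mul_eq_one_sub_mul_sub hq, Module.End.mul_apply, hx, map_zero]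

theorem IsIdempotentElem.finrank_range_eq_of_trace_sub_eq_zero {K V : Type*} [Field K]
    [CharZero K] [AddCommGroup V] [Module K V] [FiniteDimensional K V] {p q : V →ₗ[K] V}
    (hp : IsIdempotentElem p) (hq : IsIdempotentElem q) (h : trace K V (q - p) = 0) :
    finrank K (range q) = finrank K (range p) := by
  rw [map_sub, hp.isProj_range.trace, hq.isProj_range.trace, sub_eq_zero] at h
  exact_mod_cast h

end Idempotent

end LinearMap

section InnerProductSpace

variable {𝕜 E F : Type*} [RCLike 𝕜] [NormedAddCommGroup E] [InnerProductSpace 𝕜 E]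
  [NormedAddCommGroup F] [InnerProductSpace 𝕜 F]

namespace LinearIsometryEquiv

noncomputable def ofFinrankEq [FiniteDimensional 𝕜 E] [FiniteDimensional 𝕜 F]
    (h : finrank 𝕜 E = finrank 𝕜 F) : E ≃ₗᵢ[𝕜] F :=
  (stdOrthonormalBasis 𝕜 E).repr.trans
    ((stdOrthonormalBasis 𝕜 F).reindex (finCongr h.symm)).repr.symm

variable {K : Submodule 𝕜 E} {K' : Submodule 𝕜 F} [K.HasOrthogonalProjection]
  [K'.HasOrthogonalProjection]

noncomputable def orthogonalSum (e : K ≃ₗᵢ[𝕜] K') (f : Kᗮ ≃ₗᵢ[𝕜] K'ᗮ) : E ≃ₗᵢ[𝕜] F :=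
  K.orthogonalDecomposition.trans ((e.withLpProdCongr 2 f).trans K'.orthogonalDecomposition.symm)

variable (e : K ≃ₗᵢ[𝕜] K') (f : Kᗮ ≃ₗᵢ[𝕜] K'ᗮ)

theorem orthogonalSum_apply (x : E) :
    orthogonalSum e f x = e (K.orthogonalProjectionOnto x) + f (Kᗮ.orthogonalProjectionOnto x) := by
  simp [orthogonalSum]

theorem orthogonalSum_apply_of_mem {x : E} (hx : x ∈ K) : orthogonalSum e f x = e ⟨x, hx⟩ := by
  lift x to K using hx
  simp [orthogonalSum_apply]

theorem orthogonalSum_apply_of_mem_orthogonal {x : E} (hx : x ∈ Kᗮ) :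
    orthogonalSum e f x = f ⟨x, hx⟩ := by
  lift x to Kᗮ using hx
  simp [orthogonalSum_apply]

theorem orthogonalSum_starProjection (x : E) :
    orthogonalSum e f (K.starProjection x) = K'.starProjection (orthogonalSum e f x) := by
  rw [starProjection_apply, orthogonalSum_apply_of_mem _ _ (coe_mem _), orthogonalSum_apply,
    _root_.map_add, starProjection_mem_subspace_eq_self,
    (starProjection_apply_eq_zero_iff K').mpr (f _).2, add_zero]

end LinearIsometryEquiv

namespace LinearMap.IsSymmetricProjection

variable {p q : E →ₗ[𝕜] E}

theorem restrict (hp : p.IsSymmetricProjection) {V : Submodule 𝕜 E} (hV : Set.MapsTo p V V) :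
    (p.restrict hV).IsSymmetricProjection where
  isIdempotentElem := by
    ext x
    exact congr($(hp.isIdempotentElem.eq) x)
  isSymmetric := hp.isSymmetric.restrict_invariant hV

theorem exists_conj_eq_of_finrank_range_eq [FiniteDimensional 𝕜 E]
    (hp : p.IsSymmetricProjection) (hq : q.IsSymmetricProjection)
    (h : finrank 𝕜 (range q) = finrank 𝕜 (range p)) :
    ∃ U : E ≃ₗᵢ[𝕜] E, ∀ x, p (U x) = U (q x) := by
  have h' : finrank 𝕜 (range q)ᗮ = finrank 𝕜 (range p)ᗮ := by
    have := (range q).finrank_add_finrank_orthogonal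
    have := (range p).finrank_add_finrank_orthogonal
    omega
  obtain ⟨_, hp⟩ := isSymmetricProjection_iff_eq_coe_starProjection_range.mp hp
  obtain ⟨_, hq⟩ := isSymmetricProjection_iff_eq_coe_starProjection_range.mp hq
  refine ⟨.orthogonalSum (.ofFinrankEq h) (.ofFinrankEq h'), fun x => ?_⟩
  rw [congr($hp _), congr($hq x)]
  exact (LinearIsometryEquiv.orthogonalSum_starProjection _ _ x).symm

theorem exists_conj_eq_of_trace_restrict_sub_eq_zero (hp : p.IsSymmetricProjection)
    (hq : q.IsSymmetricProjection) [FiniteDimensional 𝕜 (range (q - p))]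
    (htr : trace 𝕜 (range (q - p)) ((q - p).restrict fun x _ => mem_range_self (q - p) x) = 0) :
    ∃ V : E ≃ₗᵢ[𝕜] E, (∀ x ∈ (range (q - p))ᗮ, V x = x) ∧ ∀ x, p (V x) = V (q x) := by
  set R := range (q - p)
  have hpR := hp.isIdempotentElem.mapsTo_range_sub hq.isIdempotentElem
  have hqR := hp.isIdempotentElem.mapsTo_range_sub' hq.isIdempotentElem
  have hrank := (hp.restrict hpR).isIdempotentElem.finrank_range_eq_of_trace_sub_eq_zero
    (hq.restrict hqR).isIdempotentElem (by rwa [restrict_sub])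
  obtain ⟨U, hU⟩ := (hp.restrict hpR).exists_conj_eq_of_finrank_range_eq (hq.restrict hqR) hrank
  let V := U.orthogonalSum (.refl 𝕜 Rᗮ)
  have hV_perp : ∀ x ∈ Rᗮ, V x = x := fun x hx => U.orthogonalSum_apply_of_mem_orthogonal _ hx
  suffices p ∘ₗ V.toLinearMap = V.toLinearMap ∘ₗ q from ⟨V, hV_perp, fun x => congr($this x)⟩
  refine ext_on_codisjoint R.isCompl_orthogonal.codisjoint (fun x hx => ?_) (fun x hx => ?_)
  · change p (V x) = V (q x)
    rw [U.orthogonalSum_apply_of_mem _ hx, U.orthogonalSum_apply_of_mem _ (hqR hx)]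
    exact congr(Subtype.val $(hU ⟨x, hx⟩))
  · have hR_ker : Rᗮ = ker (q - p) := (hq.isSymmetric.sub hp.isSymmetric).orthogonal_range
    have hx' : x ∈ ker (q - p) := hR_ker ▸ hx
    have hpx : p x ∈ Rᗮ := hR_ker ▸ hp.isIdempotentElem.mapsTo_ker_sub hq.isIdempotentElem hx'
    change p (V x) = V (q x)
    rw [hV_perp x hx, sub_eq_zero.mp hx', hV_perp _ hpx]

end LinearMap.IsSymmetricProjection

end InnerProductSpace

/-- If `P`, `Q` are orthogonal projections on a complex Hilbert space with
`Q - P` of finite rank and `Tr(Q - P) = 0`, then there is a unitary `V` acting as the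
identity on the orthogonal complement of the range of `Q - P` with `Q = V* P V`. -/
theorem exists_unitary_conjugating_projections
    {H : Type*} [NormedAddCommGroup H] [InnerProductSpace ℂ H] [CompleteSpace H]
    (P Q : H →L[ℂ] H)
    (hP_proj : P ∘L P = P) (hP_sa : IsSelfAdjoint P)
    (hQ_proj : Q ∘L Q = Q) (hQ_sa : IsSelfAdjoint Q)
    (hfin : FiniteRankOp (Q - P))
    (htr : trFR (Q - P) = 0) :
    ∃ V ∈ unitary (H →L[ℂ] H),
      (∀ x ∈ (LinearMap.range ((Q - P : H →L[ℂ] H) : H →ₗ[ℂ] H))ᗮ, V x = x) ∧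
      Q = star V * P * V := by
  have hp : (P : H →ₗ[ℂ] H).IsSymmetricProjection :=
    ContinuousLinearMap.isStarProjection_iff_isSymmetricProjection.mp ⟨hP_proj, hP_sa⟩
  have hq : (Q : H →ₗ[ℂ] H).IsSymmetricProjection :=
    ContinuousLinearMap.isStarProjection_iff_isSymmetricProjection.mp ⟨hQ_proj, hQ_sa⟩
  have : FiniteDimensional ℂ (range ((Q : H →ₗ[ℂ] H) - (P : H →ₗ[ℂ] H))) := hfin
  obtain ⟨V, hV_perp, hPV⟩ := hp.exists_conj_eq_of_trace_restrict_sub_eq_zero hq htr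
  have hV : (V : H →L[ℂ] H) ∈ unitary (H →L[ℂ] H) := (Unitary.linearIsometryEquiv.symm V).2
  refine ⟨V, hV, hV_perp, ?_⟩
  rw [mul_assoc, show P * V = V * Q from ContinuousLinearMap.ext hPV, ← mul_assoc,
    Unitary.star_mul_self_of_mem hV, one_mul]
end

section
/- Let U be a unitary with [P,U] of finite rank, and let P' be another orthogonal projection such that P - P' has finite rank. Then Tr(U*PU - P) = Tr(U*P'U - P'). In particular, the index of a quantum walk does not depend on the position of the cut. -/
/-!
The operators `U* P U - P` and `U* P' U - P'` differ by `U* D U - D` with `D = P - P'` of finite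
rank. Both `U* D U` and `D` have finite rank, and by cyclicity of the trace and `U U* = 1` they
have the same trace, so the difference has trace zero.
-/

theorem LinearMap.trace_restrict_comp_comm {K M : Type*} [Field K] [AddCommGroup M]
    [Module K M] {V W : Submodule K M} [FiniteDimensional K V] [FiniteDimensional K W]
    {f g : M →ₗ[K] M} (hf : Set.MapsTo f V W) (hg : Set.MapsTo g W V) :
    trace K V ((g ∘ₗ f).restrict (hg.comp hf)) = trace K W ((f ∘ₗ g).restrict (hf.comp hg)) := by
  rw [restrict_comp hf hg, restrict_comp hg hf, trace_comp_comm']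

theorem LinearMap.range_sub_le {R M N : Type*} [Ring R] [AddCommGroup M] [AddCommGroup N]
    [Module R M] [Module R N] (f g : M →ₗ[R] N) : range (f - g) ≤ range f ⊔ range g := by
  rw [sub_eq_add_neg, ← range_neg g]
  exact range_add_le _ _

section FiniteRank

variable {H : Type*} [NormedAddCommGroup H] [InnerProductSpace ℂ H]

namespace FiniteRankOp

variable {A B : H →L[ℂ] H}

theorem mul_right (hA : FiniteRankOp A) (B : H →L[ℂ] H) : FiniteRankOp (A * B) :=
  have : FiniteDimensional ℂ (LinearMap.range (A : H →ₗ[ℂ] H)) := hA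
  Submodule.finiteDimensional_of_le (LinearMap.range_comp_le_range _ _)

theorem mul_left (A : H →L[ℂ] H) (hB : FiniteRankOp B) : FiniteRankOp (A * B) := by
  have : FiniteDimensional ℂ (LinearMap.range (B : H →ₗ[ℂ] H)) := hB
  change FiniteDimensional ℂ (LinearMap.range ((A : H →ₗ[ℂ] H) ∘ₗ (B : H →ₗ[ℂ] H)))
  rw [LinearMap.range_comp]
  infer_instance

theorem sub (hA : FiniteRankOp A) (hB : FiniteRankOp B) : FiniteRankOp (A - B) := by
  have : FiniteDimensional ℂ (LinearMap.range (A : H →ₗ[ℂ] H)) := hA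
  have : FiniteDimensional ℂ (LinearMap.range (B : H →ₗ[ℂ] H)) := hB
  exact Submodule.finiteDimensional_of_le (LinearMap.range_sub_le _ _)

end FiniteRankOp

/-- Cyclicity of the trace, applied to `T : V → range T` and the inclusion `range T → V`. -/
theorem trFR_eq_trace_restrict (T : H →L[ℂ] H) {V : Submodule ℂ H} [FiniteDimensional ℂ V]
    (h : LinearMap.range (T : H →ₗ[ℂ] H) ≤ V) :
    trFR T = LinearMap.trace ℂ V
      ((T : H →ₗ[ℂ] H).restrict fun x _ => h (LinearMap.mem_range_self _ x)) :=
  have := Submodule.finiteDimensional_of_le h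
  (LinearMap.trace_restrict_comp_comm (f := (T : H →ₗ[ℂ] H)) (g := LinearMap.id)
    (fun x _ => LinearMap.mem_range_self _ x) (fun _ hx => h hx)).symm

theorem trFR_sub {A B : H →L[ℂ] H} (hA : FiniteRankOp A) (hB : FiniteRankOp B) :
    trFR (A - B) = trFR A - trFR B := by
  have : FiniteDimensional ℂ (LinearMap.range (A : H →ₗ[ℂ] H)) := hA
  have : FiniteDimensional ℂ (LinearMap.range (B : H →ₗ[ℂ] H)) := hB
  let V := LinearMap.range (A : H →ₗ[ℂ] H) ⊔ LinearMap.range (B : H →ₗ[ℂ] H)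
  rw [trFR_eq_trace_restrict (V := V) _ (LinearMap.range_sub_le _ _),
    trFR_eq_trace_restrict (V := V) A le_sup_left,
    trFR_eq_trace_restrict (V := V) B le_sup_right, ← map_sub]
  rfl

theorem trFR_mul_comm {A : H →L[ℂ] H} (hA : FiniteRankOp A) (B : H →L[ℂ] H) :
    trFR (A * B) = trFR (B * A) := by
  have : FiniteDimensional ℂ (LinearMap.range (A : H →ₗ[ℂ] H)) := hA
  set W := LinearMap.range (A : H →ₗ[ℂ] H)
  set V := W.map (B : H →ₗ[ℂ] H)
  have hAB : LinearMap.range ((A * B : H →L[ℂ] H) : H →ₗ[ℂ] H) ≤ W :=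
    LinearMap.range_comp_le_range _ _
  have hBA : LinearMap.range ((B * A : H →L[ℂ] H) : H →ₗ[ℂ] H) ≤ V :=
    (LinearMap.range_comp (A : H →ₗ[ℂ] H) (B : H →ₗ[ℂ] H)).le
  rw [trFR_eq_trace_restrict _ hAB, trFR_eq_trace_restrict _ hBA]
  exact LinearMap.trace_restrict_comp_comm (f := (B : H →ₗ[ℂ] H)) (g := (A : H →ₗ[ℂ] H))
    (fun x hx => Submodule.mem_map_of_mem hx) (fun x _ => LinearMap.mem_range_self _ x)

theorem trFR_star_mul_mul_of_mem_unitary [CompleteSpace H] {U D : H →L[ℂ] H}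
    (hU : U ∈ unitary (H →L[ℂ] H)) (hD : FiniteRankOp D) : trFR (star U * D * U) = trFR D := by
  rw [trFR_mul_comm (hD.mul_left (star U)) U, ← mul_assoc, Unitary.mul_star_self_of_mem hU,
    one_mul]

end FiniteRank

theorem index_independent_of_cut_general
    {H : Type*} [NormedAddCommGroup H] [InnerProductSpace ℂ H] [CompleteSpace H]
    (U P P' : H →L[ℂ] H) (hU : U ∈ unitary (H →L[ℂ] H))
    (hPP' : FiniteRankOp (P - P'))
    (hfin : FiniteRankOp (P * U - U * P)) :
    trFR (star U * P * U - P) = trFR (star U * P' * U - P') := by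
  have hconj : FiniteRankOp (star U * (P - P') * U) := (hPP'.mul_left (star U)).mul_right U
  have hcut : (star U * P * U - P) - (star U * P' * U - P')
      = star U * (P - P') * U - (P - P') := by noncomm_ring
  have hfinP : FiniteRankOp (star U * P * U - P) := by
    rw [show star U * P * U - P = star U * (P * U - U * P) by
      rw [mul_sub, ← mul_assoc, ← mul_assoc, Unitary.star_mul_self_of_mem hU, one_mul]]
    exact hfin.mul_left (star U)
  have hfinP' : FiniteRankOp (star U * P' * U - P') := by
    rw [show star U * P' * U - P' = (star U * P * U - P) - (star U * (P - P') * U - (P - P')) by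
      rw [← hcut, sub_sub_cancel]]
    exact hfinP.sub (hconj.sub hPP')
  rw [← sub_eq_zero, ← trFR_sub hfinP hfinP', hcut, trFR_sub hconj hPP',
    trFR_star_mul_mul_of_mem_unitary hU hPP', sub_self]

/-- The index of a quantum walk does not depend on the position of the cut:
if `P`, `P'` are orthogonal projections with `P - P'` of finite rank and `U` is a unitary
with `[P, U]` of finite rank, then `Tr(U* P U - P) = Tr(U* P' U - P')`. -/
theorem index_independent_of_cut
    {H : Type*} [NormedAddCommGroup H] [InnerProductSpace ℂ H] [CompleteSpace H]
    (U P P' : H →L[ℂ] H) (hU : U ∈ unitary (H →L[ℂ] H))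
    (hP_proj : P ∘L P = P) (hP_sa : IsSelfAdjoint P)
    (hP'_proj : P' ∘L P' = P') (hP'_sa : IsSelfAdjoint P')
    (hPP' : FiniteRankOp (P - P'))
    (hfin : FiniteRankOp (P * U - U * P)) :
    trFR (star U * P * U - P) = trFR (star U * P' * U - P') :=
  index_independent_of_cut_general U P P' hU hPP' hfin
end
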